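/- Let I ⊆ [0,1] and define I₊ = { Σ_{j=1}^m i_j : i_j ∈ I } ∩ [0,1] and D(I) = { (m-1+f)/m : m ∈ ℤ_{>0}, f ∈ I₊ } ∩ [0,1]. If I satisfies the descending chain condition (every nonincreasing sequence in I is eventually constant), then D(I) also satisfies the descending chain condition. -/

import Mathlib

/-- A set `S ⊆ [0,1]` satisfies DCC if it contains no strictly decreasing
infinite sequence. -/
def SatisfiesDCC (S : Set ℚ) : Prop :=
  ∀ f : ℕ → ℚ, (∀ n, f n ∈ S) → ¬ StrictAnti f

/-- `I₊ = { Σ i_j : i_j ∈ I } ∩ [0,1]`. -/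
def IPlus (I : Set ℚ) : Set ℚ :=
  {x | ∃ (m : ℕ) (g : Fin m → ℚ), (∀ j, g j ∈ I) ∧ x = ∑ j, g j} ∩ Set.Icc 0 1

/-- `D(I) = { (m - 1 + f)/m : m ∈ ℤ_{>0}, f ∈ I₊ } ∩ [0,1]`. -/
def DSet (I : Set ℚ) : Set ℚ :=
  {x | ∃ m : ℕ, 0 < m ∧ ∃ f ∈ IPlus I, x = ((m : ℚ) - 1 + f) / m} ∩ Set.Icc 0 1

/-!
Descending chains are the same as failures of well-foundedness. The set `I₊` lies in the additive
monoid generated by the nonnegative well-founded set `I`, which is partially well ordered. Below any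
`a < 1`, an element `(m - 1 + f) / m` of `D(I)` forces `m ≤ 1 / (1 - a)`, so that part of `D(I)` is a
finite union of monotone images of `I₊`; and a descending chain in `D(I) ⊆ [0, 1]` lies, after its
first term, below some `a < 1`.
-/

lemma satisfiesDCC_iff_isWF {S : Set ℚ} : SatisfiesDCC S ↔ S.IsWF := by
  rw [Set.isWF_iff_no_descending_seq]
  exact forall_congr' fun f => by tauto

theorem Set.isWF_of_isWF_inter_Iic_of_lt {α : Type*} [Preorder α] {S : Set α} {b : α}
    (hS : ∀ x ∈ S, x ≤ b) (h : ∀ a < b, (S ∩ Set.Iic a).IsWF) : S.IsWF := by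
  rw [Set.isWF_iff_no_descending_seq]
  intro f hf hfS
  have hlt : f 1 < b := (hf zero_lt_one).trans_le (hS _ (hfS 0))
  refine Set.isWF_iff_no_descending_seq.1 (h _ hlt) (f ∘ Nat.succ)
    (hf.comp_strictMono fun _ _ => Nat.succ_lt_succ) fun n => ⟨hfS _, ?_⟩
  exact hf.antitone (Nat.succ_le_succ n.zero_le)

lemma isWF_IPlus {I : Set ℚ} (hI : ∀ x ∈ I, 0 ≤ x) (h : I.IsWF) : (IPlus I).IsWF := by
  refine (h.isPWO.addSubmonoid_closure hI).isWF.mono ?_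
  rintro x ⟨⟨m, g, hg, rfl⟩, -⟩
  exact AddSubmonoid.sum_mem _ fun j _ => AddSubmonoid.subset_closure (hg j)

lemma DSet_inter_Iic_subset (I : Set ℚ) {a : ℚ} (ha : a < 1) :
    DSet I ∩ Set.Iic a ⊆
      ⋃ m ∈ Finset.range (⌈1 / (1 - a)⌉₊ + 1), (fun f => ((m : ℚ) - 1 + f) / m) '' IPlus I := by
  rintro x ⟨⟨⟨m, hm, f, hf, rfl⟩, -⟩, hxa⟩
  simp only [Set.mem_iUnion, Finset.mem_range]
  refine ⟨m, ?_, f, hf, rfl⟩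
  have hmq : (0 : ℚ) < m := by exact_mod_cast hm
  have hma : (m : ℚ) * (1 - a) ≤ 1 := by
    rw [Set.mem_Iic, div_le_iff₀ hmq] at hxa
    linarith [hf.2.1]
  have hm_le : (m : ℚ) ≤ ⌈1 / (1 - a)⌉₊ :=
    ((le_div_iff₀ (by linarith)).2 hma).trans (Nat.le_ceil _)
  exact Nat.lt_succ_of_le (by exact_mod_cast hm_le)

lemma isWF_DSet {I : Set ℚ} (hI : ∀ x ∈ I, 0 ≤ x) (h : I.IsWF) : (DSet I).IsWF := by
  refine Set.isWF_of_isWF_inter_Iic_of_lt (b := 1) (fun x hx => hx.2.2) fun a ha => ?_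
  refine ((Finset.isWF_bUnion _).2 fun m _ => ?_).mono (DSet_inter_Iic_subset I ha)
  have hmono : Monotone fun f : ℚ => ((m : ℚ) - 1 + f) / m :=
    fun f g hfg => div_le_div_of_nonneg_right (by linarith) m.cast_nonneg
  exact ((isWF_IPlus hI h).isPWO.image_of_monotone hmono).isWF

/-- [mp04, Lemma 4.4]: if `I ⊆ [0,1]` satisfies the descending chain
condition, then so does `D(I)`. -/
theorem stmt11 (I : Set ℚ) (hI : I ⊆ Set.Icc 0 1) (h : SatisfiesDCC I) :
    SatisfiesDCC (DSet I) :=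
  satisfiesDCC_iff_isWF.2 <| isWF_DSet (fun _ hx => (hI hx).1) (satisfiesDCC_iff_isWF.1 h)
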